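/- (Kostant formula, combinatorial form.) Let P be a finite set. For each p ∈ P let ε_p ∈ {1, −1}, let μ_p ∈ ℤ, let m_p ≥ 1, and let α_{p,1},…,α_{p,m_p} be positive integers with μ_p ≡ ∑_{j} α_{p,j} (mod 2). For β ∈ ℤ let N̄_p(β) be the (finite) number of tuples k ∈ ℕ^{m_p} with 2β = μ_p − ∑_{j=1}^{m_p} (2k_j + 1)α_{p,j}. Suppose c : ℤ → ℤ is finitely supported and that for every real λ > 1 one has ∑_{β ∈ ℤ} c(β) λ^β = ∑_{p ∈ P} ε_p · λ^{(μ_p − ∑_j α_{p,j})/2} · ∏_{j=1}^{m_p} (1 − λ^{−α_{p,j}})^{−1}. Then for every β ∈ ℤ, c(β) = ∑_{p ∈ P} ε_p · N̄_p(β). -/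

import Mathlib

/-- The partition function `N̄_p(β)`: the number of tuples `k ∈ ℕ^{m_p}` with
`2β = μ_p − ∑_j (2k_j + 1) α_{p,j}`. -/
noncomputable def Nbar (m : ℕ) (α : Fin m → ℕ) (μ β : ℤ) : ℕ :=
  Nat.card {k : Fin m → ℕ | 2 * β = μ - ∑ j, (2 * (k j : ℤ) + 1) * (α j : ℤ)}

/-!
Put `x = λ⁻¹ ∈ (0,1)` and multiply the character identity by `x ^ B` for `B` large. The left
side becomes the finite series `∑ₙ c(B - n) xⁿ`, and by the geometric series each fixed-point
term `x ^ (B - (μ_p - ∑ⱼ α_{p,j})/2) ∏ⱼ (1 - x ^ α_{p,j})⁻¹` expands into `∑ₙ N̄_p(B - n) xⁿ`;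
the parity condition makes the exponent an honest integer. Two power series that agree on
`(0,1)` have the same coefficients, by the identity theorem for analytic functions.
-/

open Filter Topology

theorem hasSum_natCard_fiber_smul {ι E : Type*} [NormedAddCommGroup E] [CompleteSpace E]
    (f : ι → ℕ) {g : ℕ → E} {s : E} (h : HasSum (g ∘ f) s) :
    HasSum (fun n => Nat.card (f ⁻¹' {n}) • g n) s := by
  convert h.tsum_fiberwise f using 2 with n
  rw [← tsum_const]
  exact tsum_congr fun i => by rw [Function.comp_apply, i.2]

theorem hasSum_pi_prod_of_nonneg {β : Type*} {m : ℕ} {f : Fin m → β → ℝ} {s : Fin m → ℝ}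
    (hf : ∀ j b, 0 ≤ f j b) (hs : ∀ j, HasSum (f j) (s j)) :
    HasSum (fun k : Fin m → β => ∏ j, f j (k j)) (∏ j, s j) := by
  induction m with
  | zero => simp
  | succ m ih =>
    have htail : HasSum (fun k : Fin m → β => ∏ j, f j.succ (k j)) (∏ j : Fin m, s j.succ) :=
      ih (fun j => hf j.succ) (fun j => hs j.succ)
    have hsummable : Summable fun q : β × (Fin m → β) => f 0 q.1 * ∏ j, f j.succ (q.2 j) := by
      apply (hs 0).summable.mul_of_nonneg htail.summable
      · exact hf 0
      · exact fun k => Finset.prod_nonneg fun j _ => hf j.succ (k j)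
    have hcons : (fun k => ∏ j, f j (k j)) ∘ Fin.consEquiv (fun _ => β) =
        fun q => f 0 q.1 * ∏ j, f j.succ (q.2 j) := by
      funext ⟨b, k⟩
      simp [Fin.prod_univ_succ]
    rw [Fin.prod_univ_succ, ← (Fin.consEquiv fun _ => β).hasSum_iff, hcons]
    simpa only using (hs 0).mul htail hsummable

theorem hasSum_pow_sum_mul {m : ℕ} {α : Fin m → ℕ} (hα : ∀ j, α j ≠ 0) {x : ℝ}
    (hx0 : 0 ≤ x) (hx1 : x < 1) :
    HasSum (fun k : Fin m → ℕ => x ^ ∑ j, k j * α j) (∏ j, (1 - x ^ α j)⁻¹) := by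
  have := hasSum_pi_prod_of_nonneg (fun j k => pow_nonneg (pow_nonneg hx0 (α j)) k)
    fun j => hasSum_geometric_of_lt_one (pow_nonneg hx0 _) (pow_lt_one₀ hx0 hx1 (hα j))
  simpa [← pow_mul, mul_comm, Finset.prod_pow_eq_pow_sum] using this

theorem Nbar_sub_natCast_eq_natCard_fiber {m : ℕ} {α : Fin m → ℕ} {μ B : ℤ} {t : ℕ}
    (ht : 2 * (B - t) = μ - ∑ j, (α j : ℤ)) (n : ℕ) :
    Nbar m α μ (B - n) = Nat.card ((fun k : Fin m → ℕ => t + ∑ j, k j * α j) ⁻¹' {n}) := by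
  unfold Nbar
  congr 2
  ext k
  have hsum : ∑ j, (2 * (k j : ℤ) + 1) * α j = 2 * ∑ j, (k j * α j : ℕ) + ∑ j, (α j : ℤ) := by
    push_cast
    rw [Finset.mul_sum, ← Finset.sum_add_distrib]
    exact Finset.sum_congr rfl fun j _ => by ring
  simp only [Set.mem_ofPred_eq, Set.mem_preimage, Set.mem_singleton_iff, hsum]
  omega

theorem hasSum_Nbar_sub_mul_pow {m : ℕ} {α : Fin m → ℕ} (hα : ∀ j, 0 < α j) {μ B : ℤ} {t : ℕ}
    (ht : 2 * (B - t) = μ - ∑ j, (α j : ℤ)) {x : ℝ} (hx0 : 0 ≤ x) (hx1 : x < 1) :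
    HasSum (fun n : ℕ => (Nbar m α μ (B - n) : ℝ) * x ^ n) (x ^ t * ∏ j, (1 - x ^ α j)⁻¹) := by
  have h := (hasSum_pow_sum_mul (fun j => (hα j).ne') hx0 hx1).mul_left (x ^ t)
  simp only [← pow_add] at h
  simpa [Nbar_sub_natCast_eq_natCard_fiber ht] using hasSum_natCard_fiber_smul _ (g := (x ^ ·)) h

theorem hasSum_sub_natCast_mul_pow {c : ℤ → ℝ} (hc : (Function.support c).Finite) {B : ℤ}
    (hB : Function.support c ⊆ Set.Iic B) {x : ℝ} (hx : x ≠ 0) :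
    HasSum (fun n : ℕ => c (B - n) * x ^ n) ((∑' β, c β * x⁻¹ ^ β) * x ^ B) := by
  set f : ℤ → ℝ := fun β => c β * x⁻¹ ^ β * x ^ B
  have hf : HasSum f ((∑' β, c β * x⁻¹ ^ β) * x ^ B) := by
    rw [← tsum_mul_right]
    exact (summable_of_hasFiniteSupport (hc.subset <| (Function.support_mul_subset_left _ _).trans
      (Function.support_mul_subset_left _ _))).hasSum
  have hrange : ∀ β ∉ Set.range (fun n : ℕ => B - n), f β = 0 := by
    intro β hβ
    by_contra hfβ
    have hβB : β ≤ B := hB fun hcβ => hfβ (by simp [f, hcβ])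
    exact hβ ⟨(B - β).toNat, by simp only; omega⟩
  have hinj : Function.Injective (fun n : ℕ => B - n) := fun a b hab => by simpa using hab
  convert (hinj.hasSum_iff hrange).mpr hf using 2 with n
  simp [f, zpow_sub₀ hx, mul_assoc, zpow_ne_zero, hx]

theorem hasSum_Nbar_sub_mul_pow_of_modEq {m : ℕ} {α : Fin m → ℕ} (hα : ∀ j, 0 < α j) {μ B : ℤ}
    (hpar : μ ≡ ∑ j, (α j : ℤ) [ZMOD 2]) (hB : (μ - ∑ j, (α j : ℤ)) / 2 ≤ B) {x : ℝ}
    (hx0 : 0 < x) (hx1 : x < 1) :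
    HasSum (fun n : ℕ => (Nbar m α μ (B - n) : ℝ) * x ^ n)
      (x⁻¹ ^ ((μ - ∑ j, (α j : ℤ)) / 2) * (∏ j, (1 - x⁻¹ ^ (-(α j : ℤ)))⁻¹) * x ^ B) := by
  set e := (μ - ∑ j, (α j : ℤ)) / 2
  have he : 2 * e = μ - ∑ j, (α j : ℤ) := Int.mul_ediv_cancel' hpar.symm.dvd
  have ht : ((B - e).toNat : ℤ) = B - e := Int.toNat_of_nonneg (by omega)
  have h2t : 2 * (B - (B - e).toNat) = μ - ∑ j, (α j : ℤ) := by omega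
  convert hasSum_Nbar_sub_mul_pow hα h2t hx0.le hx1 using 1
  rw [← zpow_natCast, ht, zpow_sub₀ hx0.ne', inv_zpow', zpow_neg]
  simp only [inv_zpow', neg_neg, zpow_natCast]
  ring

open FormalMultilinearSeries in
theorem eq_zero_of_hasSum_mul_pow_eq_zero {a : ℕ → ℝ}
    (h : ∀ᶠ x in 𝓝[>] (0 : ℝ), HasSum (fun n => a n * x ^ n) 0) : a = 0 := by
  set p := ofScalars ℝ a
  obtain ⟨r, hsum, hr⟩ := (h.and self_mem_nhdsWithin).exists
  have hterms : Tendsto (fun n => ‖p n‖ * r ^ n) atTop (𝓝 0) := by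
    simpa [p, ofScalars_norm, abs_of_pos hr] using hsum.summable.tendsto_atTop_zero.norm
  have hradius : 0 < p.radius :=
    (ENNReal.coe_pos.mpr hr).trans_le (p.le_radius_of_tendsto (r := ⟨r, hr.le⟩) hterms)
  have hp := (p.hasFPowerSeriesOnBall hradius).hasFPowerSeriesAt
  have hzero : ∀ᶠ x in 𝓝[>] (0 : ℝ), p.sum x = 0 := h.mono fun x hx => by
    simpa [p, FormalMultilinearSeries.sum, ofScalars_apply_eq, mul_comm] using hx.tsum_eq
  have := hp.locally_zero_iff.mp <| hp.analyticAt.frequently_zero_iff_eventually_zero.mp <|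
    hzero.frequently.filter_mono (nhdsWithin_mono _ fun x hx => ne_of_gt hx)
  exact (ofScalars_series_eq_zero ℝ).mp this

theorem kostant_formula_combinatorial_general (P : Type) [Fintype P]
    (ε : P → ℤ)
    (μ : P → ℤ) (m : P → ℕ)
    (α : (p : P) → Fin (m p) → ℕ) (hα : ∀ p j, 0 < α p j)
    (hpar : ∀ p, μ p ≡ (∑ j, (α p j : ℤ)) [ZMOD 2])
    (c : ℤ → ℤ) (hc : {β : ℤ | c β ≠ 0}.Finite)
    (hchar : ∀ lam : ℝ, 1 < lam →
      ∑' β : ℤ, (c β : ℝ) * lam ^ β =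
        ∑ p, (ε p : ℝ) * lam ^ ((μ p - ∑ j, (α p j : ℤ)) / 2) *
          ∏ j, (1 - lam ^ (-(α p j : ℤ)))⁻¹)
    (β : ℤ) :
    c β = ∑ p, ε p * (Nbar (m p) (α p) (μ p) β : ℤ) := by
  set e : P → ℤ := fun p => (μ p - ∑ j, (α p j : ℤ)) / 2
  obtain ⟨B, hB⟩ := ((hc.union (Set.finite_range e)).insert β).bddAbove
  have hcoeff : (fun n : ℕ => (c (B - n) : ℝ) -
      ∑ p, (ε p : ℝ) * Nbar (m p) (α p) (μ p) (B - n)) = 0 := by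
    refine eq_zero_of_hasSum_mul_pow_eq_zero ?_
    filter_upwards [Ioo_mem_nhdsGT one_pos] with x ⟨hx0, hx1⟩
    have hlhs := hasSum_sub_natCast_mul_pow (c := fun β => (c β : ℝ))
      (hc.subset fun γ hγ => by simpa using hγ)
      (fun γ hγ => hB (Set.mem_insert_of_mem _ (Or.inl (by simpa using hγ)))) hx0.ne'
    have hrhs := hasSum_sum fun p (_ : p ∈ Finset.univ) =>
      (hasSum_Nbar_sub_mul_pow_of_modEq (hα p) (hpar p)
        (hB (Set.mem_insert_of_mem _ (Or.inr ⟨p, rfl⟩))) hx0 hx1).mul_left (ε p : ℝ)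
    rw [hchar _ (one_lt_inv₀ hx0 |>.mpr hx1), Finset.sum_mul] at hlhs
    simpa [sub_mul, Finset.sum_mul, mul_assoc] using hlhs.sub hrhs
  have hβ := congrFun hcoeff (B - β).toNat
  rw [Int.toNat_of_nonneg (sub_nonneg.mpr (hB (Set.mem_insert _ _))), sub_sub_cancel] at hβ
  exact_mod_cast sub_eq_zero.mp hβ

/-- **Kostant formula, combinatorial form.**  If the finitely supported multiplicity
function `c` has the character `∑_β c(β) λ^β` equal, for every real `λ > 1`, to the
fixed-point sum `∑_p ε_p λ^{(μ_p − ∑_j α_{p,j})/2} ∏_j (1 − λ^{−α_{p,j}})⁻¹`, then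
`c(β) = ∑_p ε_p N̄_p(β)` for every weight `β`. -/
theorem kostant_formula_combinatorial (P : Type) [Fintype P]
    (ε : P → ℤ) (hε : ∀ p, ε p = 1 ∨ ε p = -1)
    (μ : P → ℤ) (m : P → ℕ) (hm : ∀ p, 1 ≤ m p)
    (α : (p : P) → Fin (m p) → ℕ) (hα : ∀ p j, 0 < α p j)
    (hpar : ∀ p, μ p ≡ (∑ j, (α p j : ℤ)) [ZMOD 2])
    (c : ℤ → ℤ) (hc : {β : ℤ | c β ≠ 0}.Finite)
    (hchar : ∀ lam : ℝ, 1 < lam →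
      ∑' β : ℤ, (c β : ℝ) * lam ^ β =
        ∑ p, (ε p : ℝ) * lam ^ ((μ p - ∑ j, (α p j : ℤ)) / 2) *
          ∏ j, (1 - lam ^ (-(α p j : ℤ)))⁻¹)
    (β : ℤ) :
    c β = ∑ p, ε p * (Nbar (m p) (α p) (μ p) β : ℤ) :=
  kostant_formula_combinatorial_general P ε μ m α hα hpar c hc hchar β
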